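/- Let ρ ∈ S_{4N} with coset-type of length ℓ(ρ) (number of connected components of Γ(ρ)). Then the number of pairs of sequences (μ, ν) with μ, ν ∈ {1,...,R}^{2N} such that ν̄ = ρ(μ̄) equals R^{ℓ(ρ)}, where μ̄ = (μ_1, μ_1, μ_2, μ_2, ..., μ_{2N}, μ_{2N}) denotes the doubled sequence. -/
import Mathlib


/-- The first member of the `k`-th pair (0-indexed: `2k`). -/
def pairFst (N : ℕ) (k : Fin (2 * N)) : Fin (4 * N) :=
  ⟨2 * k.val, by have := k.isLt; omega⟩

/-- The second member of the `k`-th pair (0-indexed: `2k+1`). -/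
def pairSnd (N : ℕ) (k : Fin (2 * N)) : Fin (4 * N) :=
  ⟨2 * k.val + 1, by have := k.isLt; omega⟩

/-- The graph `Γ(ρ)` on vertices `{1, …, 4N}` with edges `(2k-1, 2k)` and
`(ρ(2k-1), ρ(2k))`. -/
def permGraph (N : ℕ) (ρ : Equiv.Perm (Fin (4 * N))) : SimpleGraph (Fin (4 * N)) :=
  SimpleGraph.fromRel fun i j =>
    (∃ k, i = pairFst N k ∧ j = pairSnd N k) ∨
    (∃ k, i = ρ (pairFst N k) ∧ j = ρ (pairSnd N k))

/-- The doubled sequence `μ̄ = (μ_1, μ_1, μ_2, μ_2, …)` of a sequence `μ` of length `2N`. -/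
def doubled (N R : ℕ) (μ : Fin (2 * N) → Fin R) (a : Fin (4 * N)) : Fin R :=
  μ ⟨a.val / 2, by have := a.isLt; omega⟩

namespace CardDoubledAux

variable {N R : ℕ} {ρ : Equiv.Perm (Fin (4 * N))}

lemma adj_fst_snd (k : Fin (2 * N)) :
    (permGraph N ρ).Adj (pairFst N k) (pairSnd N k) := by
  refine ⟨?_, Or.inl (Or.inl ⟨k, rfl, rfl⟩)⟩
  simp only [pairFst, pairSnd, ne_eq, Fin.mk.injEq]
  omega

lemma adj_rho (k : Fin (2 * N)) :
    (permGraph N ρ).Adj (ρ (pairFst N k)) (ρ (pairSnd N k)) := by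
  refine ⟨?_, Or.inl (Or.inr ⟨k, rfl, rfl⟩)⟩
  intro h
  have h2 := ρ.injective h
  simp only [pairFst, pairSnd, Fin.mk.injEq] at h2
  omega

lemma doubled_pairFst (μ : Fin (2 * N) → Fin R) (k : Fin (2 * N)) :
    doubled N R μ (pairFst N k) = μ k := by
  unfold doubled pairFst
  congr 1
  apply Fin.ext
  show 2 * k.val / 2 = k.val
  omega

lemma doubled_pairSnd (μ : Fin (2 * N) → Fin R) (k : Fin (2 * N)) :
    doubled N R μ (pairSnd N k) = μ k := by
  unfold doubled pairSnd
  congr 1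
  apply Fin.ext
  show (2 * k.val + 1) / 2 = k.val
  omega

lemma eq_fst_or_snd {M : ℕ} (a : Fin (4 * M)) :
    a = pairFst M ⟨a.val / 2, by have := a.isLt; omega⟩ ∨
    a = pairSnd M ⟨a.val / 2, by have := a.isLt; omega⟩ := by
  rcases Nat.mod_two_eq_zero_or_one a.val with h | h
  · left; apply Fin.ext; show a.val = 2 * (a.val / 2); omega
  · right; apply Fin.ext; show a.val = 2 * (a.val / 2) + 1; omega

/-- The component of `a` equals the component of `pairFst ⟨a/2⟩`. -/
lemma mk_pairFst (a : Fin (4 * N)) :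
    (permGraph N ρ).connectedComponentMk (pairFst N ⟨a.val / 2, by have := a.isLt; omega⟩) =
      (permGraph N ρ).connectedComponentMk a := by
  rcases eq_fst_or_snd a with h | h
  · rw [← h]
  · conv_rhs => rw [h]
    exact SimpleGraph.ConnectedComponent.sound (adj_fst_snd _).reachable

lemma mk_rho_pairFst (a : Fin (4 * N)) :
    (permGraph N ρ).connectedComponentMk (ρ (pairFst N ⟨a.val / 2, by have := a.isLt; omega⟩)) =
      (permGraph N ρ).connectedComponentMk (ρ a) := by
  rcases eq_fst_or_snd a with h | h
  · rw [← h]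
  · conv_rhs => rw [h]
    exact SimpleGraph.ConnectedComponent.sound (adj_rho _).reachable

/-- `doubled ν` is constant on edges when `(μ, ν)` is a valid pair. -/
lemma doubled_adj_const {μ ν : Fin (2 * N) → Fin R}
    (hcond : ∀ a : Fin (4 * N), doubled N R ν (ρ a) = doubled N R μ a)
    {v w : Fin (4 * N)} (h : (permGraph N ρ).Adj v w) :
    doubled N R ν v = doubled N R ν w := by
  have key : ∀ x y : Fin (4 * N),
      ((∃ k, x = pairFst N k ∧ y = pairSnd N k) ∨
       (∃ k, x = ρ (pairFst N k) ∧ y = ρ (pairSnd N k))) →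
      doubled N R ν x = doubled N R ν y := by
    rintro x y (⟨k, rfl, rfl⟩ | ⟨k, rfl, rfl⟩)
    · rw [doubled_pairFst, doubled_pairSnd]
    · rw [hcond, hcond, doubled_pairFst, doubled_pairSnd]
  rcases h with ⟨hne, h | h⟩
  · exact key v w h
  · exact (key w v h).symm

lemma doubled_walk_const {μ ν : Fin (2 * N) → Fin R}
    (hcond : ∀ a : Fin (4 * N), doubled N R ν (ρ a) = doubled N R μ a)
    {v w : Fin (4 * N)} (p : (permGraph N ρ).Walk v w) :
    doubled N R ν v = doubled N R ν w := by
  induction p with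
  | nil => rfl
  | cons h _ ih => exact (doubled_adj_const hcond h).trans ih

/-- The equivalence between valid pairs and colorings of connected components. -/
noncomputable def pairsEquiv (N R : ℕ) (ρ : Equiv.Perm (Fin (4 * N))) :
    {p : (Fin (2 * N) → Fin R) × (Fin (2 * N) → Fin R) //
        ∀ a : Fin (4 * N), doubled N R p.2 (ρ a) = doubled N R p.1 a} ≃
      ((permGraph N ρ).ConnectedComponent → Fin R) where
  toFun p := SimpleGraph.ConnectedComponent.lift (doubled N R p.1.2)
    (fun _ _ q _ => doubled_walk_const p.2 q)
  invFun h :=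
    ⟨⟨fun k => h ((permGraph N ρ).connectedComponentMk (ρ (pairFst N k))),
      fun k => h ((permGraph N ρ).connectedComponentMk (pairFst N k))⟩, by
      intro a
      show h ((permGraph N ρ).connectedComponentMk (pairFst N _)) =
        h ((permGraph N ρ).connectedComponentMk (ρ (pairFst N _)))
      rw [mk_pairFst (ρ a), mk_rho_pairFst a]⟩
  left_inv := by
    rintro ⟨⟨μ, ν⟩, hp⟩
    apply Subtype.ext
    apply Prod.ext
    · funext k
      show doubled N R ν (ρ (pairFst N k)) = μ k
      rw [hp, doubled_pairFst]
    · funext k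
      exact doubled_pairFst ν k
  right_inv := by
    intro h
    funext c
    induction c using SimpleGraph.ConnectedComponent.ind with
    | _ a =>
      show doubled N R (fun k => h ((permGraph N ρ).connectedComponentMk (pairFst N k))) a = h _
      show h ((permGraph N ρ).connectedComponentMk (pairFst N _)) = _
      rw [mk_pairFst a]

end CardDoubledAux

/-- The number of pairs of sequences `(μ, ν)` in `{1,…,R}^{2N}` with `ν̄ = ρ(μ̄)`
equals `R^{ℓ(ρ)}`, where `ℓ(ρ)` is the length of the coset-type of `ρ`, i.e. the number
of connected components of `Γ(ρ)`. -/
theorem card_doubled_sequences_eq_pow_cosetType (N R : ℕ)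
    (ρ : Equiv.Perm (Fin (4 * N))) :
    Nat.card {p : (Fin (2 * N) → Fin R) × (Fin (2 * N) → Fin R) //
        ∀ a : Fin (4 * N), doubled N R p.2 (ρ a) = doubled N R p.1 a} =
      R ^ (Nat.card (permGraph N ρ).ConnectedComponent) := by
  rw [Nat.card_eq_of_bijective _ (CardDoubledAux.pairsEquiv N R ρ).bijective]
  rw [Nat.card_fun, Nat.card_eq_fintype_card, Fintype.card_fin]
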